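/- arXiv:1211.3285 — 3 statements merged into one kernel-verified Lean document; each statement's English description precedes it below -/
import Mathlib

section
/- Let f: ℝ → (−∞,+∞] be convex, increasing and lower semicontinuous with effective domain a neighborhood of zero. Then for every a in the effective domain of (f∘exp)* with a > 0, one has (f∘exp)*(a) = min_{α>0} { f*(α) − a·ln α } + exp*(a), where exp*(a) = a ln a − a. -/
/-!
For every `α > 0`, the Fenchel–Young inequality `a t - α eᵗ ≤ a log (a / α) - a` for `exp` gives
`(f ∘ exp)*(a) ≤ (f*(α) - a log α) + (a log a - a)`. Equality holds at `α = a / x`, `x = e^{t₀}`,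
where `t₀` maximises `a t - f(eᵗ)`. The maximiser exists because this function is upper
semicontinuous and tends to `-∞` at both ends: `f` is convex, increasing and unbounded, hence grows
at least linearly. If `M` is the maximum, then `f v ≥ a log v - M` for `v > 0` with equality at `x`,
so by convexity the tangent line of `a log v - M` at `x`, of slope `a / x`, lies below `f`;
therefore `f*(a / x) = a - f x`.
-/

open scoped EReal

/-- The Legendre–Fenchel transform of an extended-real-valued function on `ℝ`. -/
noncomputable def eConj (f : ℝ → EReal) (a : ℝ) : EReal :=
  ⨆ t : ℝ, ((a * t : ℝ) : EReal) - f t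

open Real Filter Topology Set

namespace EReal

lemma coe_sub_le_coe_iff {x z : ℝ} {y : EReal} :
    (x : EReal) - y ≤ z ↔ ((x - z : ℝ) : EReal) ≤ y := by
  induction y using EReal.rec with
  | bot => simp [-EReal.coe_sub]
  | coe y => norm_cast; constructor <;> intro <;> linarith
  | top => simp [-EReal.coe_sub]

lemma coe_sub_eq_sub_add_coe (x z : ℝ) (y : EReal) :
    (x : EReal) - y = (z - y) + ((x - z : ℝ) : EReal) := by
  induction y using EReal.rec with
  | bot => simp [-EReal.coe_sub]
  | coe y => norm_cast; ring
  | top => simp [-EReal.coe_sub]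

end EReal

def EConvex (f : ℝ → EReal) : Prop :=
  ∀ x y s : ℝ, 0 ≤ s → s ≤ 1 →
    f (s * x + (1 - s) * y) ≤ (s : EReal) * f x + ((1 - s : ℝ) : EReal) * f y

namespace EConvex

variable {f : ℝ → EReal}

-- `⊥ + z = ⊥` for every `z : EReal`, `⊤` included, so one value `⊥` spreads everywhere.
lemma eq_bot_of_eq_bot (hf : EConvex f) {x : ℝ} (hx : f x = ⊥) (y : ℝ) : f y = ⊥ := by
  have h := hf x (2 * y - x) (1 / 2) (by norm_num) (by norm_num)
  rwa [show 1 / 2 * x + (1 - 1 / 2) * (2 * y - x) = y by ring, hx,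
    EReal.coe_mul_bot_of_pos (by norm_num), EReal.bot_add, le_bot_iff] at h

lemma le_coe_of_eq_coe (hf : EConvex f) {x y p q s : ℝ} (hx : f x = p) (hy : f y = q)
    (hs₀ : 0 ≤ s) (hs₁ : s ≤ 1) :
    f (s * x + (1 - s) * y) ≤ ((s * p + (1 - s) * q : ℝ) : EReal) := by
  simpa [hx, hy] using hf x y s hs₀ hs₁

lemma exists_linear_minorant (hf : EConvex f) (hmono : Monotone f) {c : ℝ} (h0 : f 0 = c)
    (hunbdd : ∀ C : ℝ, ∃ w, (C : EReal) < f w) :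
    ∃ k > 0, ∀ w, 0 ≤ w → ((c - 1 + k * w : ℝ) : EReal) ≤ f w := by
  obtain ⟨w₂, hw₂⟩ := hunbdd (c + 1)
  have hw₂pos : 0 < w₂ := by
    by_contra! h
    exact absurd (hw₂.trans_le ((hmono h).trans_eq h0)) (by norm_cast; linarith)
  refine ⟨1 / w₂, by positivity, fun w hw => ?_⟩
  rcases le_or_gt w w₂ with hle | hlt
  · calc ((c - 1 + 1 / w₂ * w : ℝ) : EReal) ≤ (c : EReal) := by
          norm_cast
          have : 1 / w₂ * w ≤ 1 := by rw [div_mul_eq_mul_div, one_mul, div_le_one hw₂pos]; exact hle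
          linarith
      _ = f 0 := h0.symm
      _ ≤ f w := hmono hw
  · have hwpos : 0 < w := hw₂pos.trans hlt
    have hw₂eq : (1 - w₂ / w) * 0 + (1 - (1 - w₂ / w)) * w = w₂ := by field_simp; ring
    have hs₀ : 0 ≤ 1 - w₂ / w := by rw [sub_nonneg, div_le_one hwpos]; exact hlt.le
    have hs₁ : 1 - w₂ / w ≤ 1 := by linarith [div_pos hw₂pos hwpos]
    induction hfw : f w using EReal.rec with
    | bot => exact absurd (hf.eq_bot_of_eq_bot hfw w₂) (ne_bot_of_gt hw₂)
    | top => exact le_top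
    | coe r =>
        have h := hw₂.trans_le (hw₂eq ▸ hf.le_coe_of_eq_coe h0 hfw hs₀ hs₁)
        norm_cast at h ⊢
        have hgain : w < w₂ * (r - c) := by
          rw [← one_lt_div hwpos, mul_div_right_comm]; linarith
        rw [one_div_mul_eq_div]
        linarith [(div_lt_iff₀' hw₂pos).2 hgain]

lemma coe_tangent_le_of_hasDerivAt (hf : EConvex f) {h : ℝ → ℝ} {h' x : ℝ}
    (hh : HasDerivAt h h' x) (hle : ∀ᶠ v in 𝓝 x, (h v : EReal) ≤ f v) (hx : f x = h x)
    (u : ℝ) : ((h x + h' * (u - x) : ℝ) : EReal) ≤ f u := by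
  induction hfu : f u using EReal.rec with
  | bot => exact absurd (hf.eq_bot_of_eq_bot hfu x) (hx ▸ EReal.coe_ne_bot _)
  | top => exact le_top
  | coe r =>
    have hline : HasDerivAt (fun s => x + s * (u - x)) (u - x) 0 :=
      (hasDerivAt_mul_const (u - x)).const_add x
    have hslope : Tendsto (slope (fun s => h (x + s * (u - x))) 0) (𝓝[>] 0)
        (𝓝 (h' * (u - x))) :=
      (hasDerivAt_iff_tendsto_slope.1 (HasDerivAt.comp_of_eq 0 hh hline (by simp))).mono_left
        (nhdsWithin_mono _ fun _ hs => ne_of_gt hs)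
    have hnear : ∀ᶠ s in 𝓝[>] (0 : ℝ), (h (x + s * (u - x)) : EReal) ≤ f (x + s * (u - x)) :=
      (tendsto_nhdsWithin_of_tendsto_nhds (by simpa using hline.continuousAt.tendsto)).eventually
        hle
    have hbound : ∀ᶠ s in 𝓝[>] (0 : ℝ), slope (fun s => h (x + s * (u - x))) 0 s ≤ r - h x := by
      filter_upwards [hnear, Ioo_mem_nhdsGT one_pos] with s hs hs01
      have hconv := hf.le_coe_of_eq_coe hfu hx hs01.1.le hs01.2.le
      rw [show s * u + (1 - s) * x = x + s * (u - x) by ring] at hconv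
      have hreal := EReal.coe_le_coe_iff.1 (hs.trans hconv)
      rw [slope_def_field, sub_zero, zero_mul, add_zero, div_le_iff₀ hs01.1]
      linarith
    have := le_of_tendsto hslope hbound
    exact EReal.coe_le_coe_iff.2 (by linarith)

end EConvex

lemma mul_sub_mul_exp_le {a α : ℝ} (ha : 0 < a) (hα : 0 < α) (t : ℝ) :
    a * t - α * exp t ≤ a * log (a / α) - a := by
  have h := add_one_le_exp (t - log (a / α))
  rw [exp_sub, exp_log (div_pos ha hα)] at h
  have hα' : α * exp t = a * (exp t / (a / α)) := by field_simp
  nlinarith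

lemma mem_Icc_of_le_mul_sub_mul_exp {a k d t : ℝ} (ha : 0 < a) (hk : 0 < k)
    (h : d ≤ a * t - k * exp t) : t ∈ Icc (d / a) (2 / k * (a * log (a / (k / 2)) - a - d)) := by
  have hFY := mul_sub_mul_exp_le ha (half_pos hk) t
  have hkt : k * t ≤ k * exp t := mul_le_mul_of_nonneg_left (by linarith [add_one_le_exp t]) hk.le
  constructor
  · rw [div_le_iff₀ ha]
    nlinarith [exp_pos t]
  · rw [div_mul_eq_mul_div, le_div_iff₀ hk]
    linarith

lemma UpperSemicontinuous.exists_forall_le_of_superlevel_subset {α β : Type*}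
    [TopologicalSpace α] [LinearOrder β] {G : α → β} (hG : UpperSemicontinuous G) {K : Set α}
    (hK : IsCompact K) {t₁ : α} (hsub : ∀ t, G t₁ ≤ G t → t ∈ K) : ∃ t₀, ∀ t, G t ≤ G t₀ := by
  obtain ⟨t₀, -, hmax⟩ := (hG.upperSemicontinuousOn K).exists_isMaxOn ⟨t₁, hsub t₁ le_rfl⟩ hK
  refine ⟨t₀, fun t => ?_⟩
  by_cases ht : t ∈ K
  · exact hmax ht
  · exact (lt_of_not_ge (mt (hsub t) ht)).le.trans (hmax (hsub t₁ le_rfl))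

lemma upperSemicontinuous_coe_sub {α : Type*} [TopologicalSpace α] {φ : α → ℝ}
    {g : α → EReal} (hφ : Continuous φ) (hg : LowerSemicontinuous g) :
    UpperSemicontinuous fun t => (φ t : EReal) - g t := by
  simp_rw [sub_eq_add_neg]
  exact (continuous_coe_real_ereal.comp hφ).upperSemicontinuous.add'
    (continuous_neg.comp_lowerSemicontinuous_antitone hg fun _ _ => EReal.neg_le_neg_iff.2)
    fun t => EReal.continuousAt_add (Or.inl (EReal.coe_ne_top _)) (Or.inl (EReal.coe_ne_bot _))


lemma eConj_eq_of_coe_tangent_le {f : ℝ → EReal} {α x c : ℝ} (hx : f x = c)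
    (htangent : ∀ u, ((c + α * (u - x) : ℝ) : EReal) ≤ f u) :
    eConj f α = ((α * x - c : ℝ) : EReal) := by
  refine le_antisymm (iSup_le fun u => ?_) ?_
  · exact EReal.coe_sub_le_coe_iff.2 ((EReal.coe_le_coe_iff.2 (by linarith)).trans (htangent u))
  · exact (le_iSup (fun u => ((α * u : ℝ) : EReal) - f u) x).trans_eq' (by rw [hx]; rfl)

lemma eConj_comp_exp_le (f : ℝ → EReal) {a α : ℝ} (ha : 0 < a) (hα : 0 < α) :
    eConj (fun t => f (exp t)) a ≤
      (eConj f α - ((a * log α : ℝ) : EReal)) + ((a * log a - a : ℝ) : EReal) := by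
  refine iSup_le fun t => ?_
  rw [EReal.coe_sub_eq_sub_add_coe _ (α * exp t)]
  calc _ ≤ eConj f α + ((a * log (a / α) - a : ℝ) : EReal) :=
        add_le_add (le_iSup (fun u => ((α * u : ℝ) : EReal) - f u) (exp t))
          (EReal.coe_le_coe_iff.2 (mul_sub_mul_exp_le ha hα t))
    _ = _ := by
        rw [sub_eq_add_neg (eConj f α), add_assoc, ← EReal.coe_neg, ← EReal.coe_add,
          log_div ha.ne' hα.ne']
        ring_nf

lemma exists_forall_mul_sub_comp_exp_le {f : ℝ → EReal} (hconv : EConvex f)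
    (hmono : Monotone f) (hlsc : LowerSemicontinuous f) {a c t₁ v B : ℝ} (ha : 0 < a)
    (h0 : f 0 = c) (h₁ : f (exp t₁) = v) (hB : ∀ t, ((a * t : ℝ) : EReal) - f (exp t) ≤ B) :
    ∃ t₀, ∀ t, ((a * t : ℝ) : EReal) - f (exp t) ≤ ((a * t₀ : ℝ) : EReal) - f (exp t₀) := by
  have hunbdd : ∀ C : ℝ, ∃ w, (C : EReal) < f w := fun C =>
    ⟨exp ((C + B + 1) / a), lt_of_lt_of_le (EReal.coe_lt_coe_iff.2 (by field_simp; linarith))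
      (EReal.coe_sub_le_coe_iff.1 (hB _))⟩
  obtain ⟨k, hk, hmin⟩ := hconv.exists_linear_minorant hmono h0 hunbdd
  have hsuper : ∀ t, ((a * t₁ : ℝ) : EReal) - f (exp t₁) ≤ ((a * t : ℝ) : EReal) - f (exp t) →
      t ∈ Icc ((a * t₁ - v + (c - 1)) / a)
        (2 / k * (a * log (a / (k / 2)) - a - (a * t₁ - v + (c - 1)))) := by
    intro t ht
    rw [h₁, ← EReal.coe_sub] at ht
    have hle := EReal.coe_le_coe_iff.1 ((ht.trans
      (EReal.sub_le_sub le_rfl (hmin _ (exp_pos t).le))).trans_eq (EReal.coe_sub _ _).symm)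
    exact mem_Icc_of_le_mul_sub_mul_exp ha hk (by linarith)
  exact (upperSemicontinuous_coe_sub (continuous_const.mul continuous_id)
    (hlsc.comp continuous_exp)).exists_forall_le_of_superlevel_subset isCompact_Icc hsuper

lemma exists_eq_coe_forall_mul_sub_comp_exp_le {f : ℝ → EReal} (hconv : EConvex f)
    (hmono : Monotone f) (hlsc : LowerSemicontinuous f) {t₁ : ℝ} (h₁ : f (exp t₁) < ⊤)
    {a : ℝ} (ha : 0 < a) (hadom : eConj (fun t => f (exp t)) a < ⊤) :
    ∃ t₀ r : ℝ, f (exp t₀) = r ∧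
      ∀ t, ((a * t : ℝ) : EReal) - f (exp t) ≤ ((a * t₀ - r : ℝ) : EReal) := by
  have hle_conj : ∀ t, ((a * t : ℝ) : EReal) - f (exp t) ≤ eConj (fun t => f (exp t)) a :=
    le_iSup (fun t => ((a * t : ℝ) : EReal) - f (exp t))
  have hbot : ∀ x, f x ≠ ⊥ := fun x hx => by
    have := hle_conj 0
    rw [hconv.eq_bot_of_eq_bot hx, EReal.coe_sub_bot] at this
    exact hadom.not_ge this
  have hreal : ∀ x, f x < ⊤ → f x = (f x).toReal := fun x hx =>
    (EReal.coe_toReal hx.ne (hbot x)).symm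
  obtain ⟨B, hB, -⟩ := EReal.exists_between_coe_real hadom
  obtain ⟨t₀, hmax⟩ := exists_forall_mul_sub_comp_exp_le hconv hmono hlsc ha
    (hreal 0 ((hmono (exp_pos t₁).le).trans_lt h₁)) (hreal _ h₁) fun t => (hle_conj t).trans hB.le
  have htop : f (exp t₀) < ⊤ := by
    by_contra! htop
    have := hmax t₁
    rw [top_le_iff.1 htop, EReal.sub_top, hreal _ h₁, ← EReal.coe_sub] at this
    exact EReal.coe_ne_bot _ (le_bot_iff.1 this)
  refine ⟨t₀, (f (exp t₀)).toReal, hreal _ htop, fun t => ?_⟩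
  rw [EReal.coe_sub, ← hreal _ htop]
  exact hmax t

lemma EConvex.eConj_eq_of_forall_mul_sub_comp_exp_le {f : ℝ → EReal} (hf : EConvex f)
    {a t₀ r : ℝ} (hr : f (exp t₀) = r)
    (hmax : ∀ t, ((a * t : ℝ) : EReal) - f (exp t) ≤ ((a * t₀ - r : ℝ) : EReal)) :
    eConj f (a * (exp t₀)⁻¹) = ((a - r : ℝ) : EReal) := by
  have hminorant : ∀ᶠ v in 𝓝 (exp t₀), ((a * log v - (a * t₀ - r) : ℝ) : EReal) ≤ f v := by
    filter_upwards [Ioi_mem_nhds (exp_pos t₀)] with v hv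
    simpa [exp_log hv] using EReal.coe_sub_le_coe_iff.1 (hmax (log v))
  have htangent := hf.coe_tangent_le_of_hasDerivAt
    (((hasDerivAt_log (exp_pos t₀).ne').const_mul a).sub_const _) hminorant (by simp [hr])
  refine (eConj_eq_of_coe_tangent_le hr fun v => ?_).trans ?_
  · simpa using htangent v
  · field_simp

/-- Let `f : ℝ → (−∞,+∞]` be convex, increasing and lower semicontinuous
with effective domain a neighborhood of zero.  Then for every `a > 0` in the effective domain
of `(f ∘ exp)*` one has `(f ∘ exp)*(a) = min_{α>0} { f*(α) − a·ln α } + (a·ln a − a)`. -/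
theorem conj_comp_exp_eq_min_add
    (f : ℝ → EReal)
    (hconv : ∀ x y s : ℝ, 0 ≤ s → s ≤ 1 →
      f (s * x + (1 - s) * y) ≤ (s : EReal) * f x + ((1 - s : ℝ) : EReal) * f y)
    (hmono : Monotone f)
    (hlsc : LowerSemicontinuous f)
    (hdom : {t : ℝ | f t < ⊤} ∈ nhds (0 : ℝ))
    (a : ℝ) (ha : 0 < a)
    (hadom : eConj (fun t => f (Real.exp t)) a < ⊤) :
    ∃ m : EReal,
      IsLeast {x : EReal | ∃ α : ℝ, 0 < α ∧
          x = eConj f α - ((a * Real.log α : ℝ) : EReal)} m ∧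
        eConj (fun t => f (Real.exp t)) a = m + ((a * Real.log a - a : ℝ) : EReal) := by
  obtain ⟨u, hfu, hu⟩ : ∃ u, f u < ⊤ ∧ 0 < u :=
    (Eventually.and (mem_nhdsWithin_of_mem_nhds hdom) (self_mem_nhdsWithin (s := Ioi 0))).exists
  obtain ⟨t₀, r, hr, hmax⟩ := exists_eq_coe_forall_mul_sub_comp_exp_le hconv hmono hlsc
    (t₁ := log u) (by rwa [exp_log hu]) ha hadom
  have hM : eConj (fun t => f (exp t)) a = ((a * t₀ - r : ℝ) : EReal) :=
    le_antisymm (iSup_le hmax)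
      ((le_iSup (fun t => ((a * t : ℝ) : EReal) - f (exp t)) t₀).trans_eq' (by rw [hr]; rfl))
  have heq : eConj (fun t => f (exp t)) a = eConj f (a * (exp t₀)⁻¹) -
      ((a * log (a * (exp t₀)⁻¹) : ℝ) : EReal) + ((a * log a - a : ℝ) : EReal) := by
    rw [hM, EConvex.eConj_eq_of_forall_mul_sub_comp_exp_le hconv hr hmax, ← EReal.coe_sub,
      ← EReal.coe_add, log_mul ha.ne' (by positivity), log_inv, log_exp]
    ring_nf
  refine ⟨_, ⟨⟨_, by positivity, rfl⟩, ?_⟩, heq⟩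
  rintro _ ⟨α, hα, rfl⟩
  exact (EReal.addLECancellable_coe _).add_le_add_iff_right.1 (heq ▸ eConj_comp_exp_le f ha hα)
end

section
/- Let Λ(t) = ln(μ/(μ−t)) for t < μ (and +∞ otherwise), μ > 0, be the cumulant generating function of an exponential random variable. Then the Legendre–Fenchel transform of the composition Λ∘exp satisfies (Λ∘exp)*(a) = a·ln(μ·a) − (a+1)·ln(a+1) for all a > 0. -/
open scoped EReal

lemma log_le_tangent (x c : ℝ) (hx : 0 < x) (hc : 0 < c) :
    Real.log x ≤ Real.log c + x / c - 1 := by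
  have h := Real.log_le_sub_one_of_pos (x := x / c) (by positivity)
  rw [Real.log_div (ne_of_gt hx) (ne_of_gt hc)] at h
  linarith

/-- Let `Λ(t) = ln(μ/(μ−t))` for `t < μ` and `+∞` otherwise (`μ > 0`).  Then
the Legendre–Fenchel transform of `Λ ∘ exp` satisfies
`(Λ∘exp)*(a) = a·ln(μ·a) − (a+1)·ln(a+1)` for all `a > 0`. -/
theorem conj_cumulant_exponential_comp_exp (m : ℝ) (hm : 0 < m) (a : ℝ) (ha : 0 < a) :
    (⨆ t : ℝ, ((a * t : ℝ) : EReal)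
        - (if Real.exp t < m then ((Real.log (m / (m - Real.exp t)) : ℝ) : EReal) else ⊤))
      = ((a * Real.log (m * a) - (a + 1) * Real.log (a + 1) : ℝ) : EReal) := by
  have ha1 : (0:ℝ) < a + 1 := by linarith
  set V : ℝ := a * Real.log (m * a) - (a + 1) * Real.log (a + 1) with hV
  have hu0 : (0:ℝ) < a * m / (a + 1) := by positivity
  have hc0 : (0:ℝ) < m / (a + 1) := by positivity
  apply le_antisymm
  · refine iSup_le fun t => ?_
    by_cases ht : Real.exp t < m
    · rw [if_pos ht, ← EReal.coe_sub, EReal.coe_le_coe_iff]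
      have het : (0:ℝ) < Real.exp t := Real.exp_pos t
      have hmt : (0:ℝ) < m - Real.exp t := by linarith
      have h1 : Real.log (Real.exp t) ≤ Real.log (a * m / (a + 1))
          + Real.exp t / (a * m / (a + 1)) - 1 := log_le_tangent _ _ het hu0
      have h2 : Real.log (m - Real.exp t) ≤ Real.log (m / (a + 1))
          + (m - Real.exp t) / (m / (a + 1)) - 1 := log_le_tangent _ _ hmt hc0
      rw [Real.log_exp] at h1
      have hdiv1 : Real.exp t / (a * m / (a + 1)) = Real.exp t * (a + 1) / (a * m) := by
        field_simp
      have hdiv2 : (m - Real.exp t) / (m / (a + 1)) = (m - Real.exp t) * (a + 1) / m := by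
        field_simp
      rw [hdiv1] at h1; rw [hdiv2] at h2
      have hlog : Real.log (m / (m - Real.exp t)) = Real.log m - Real.log (m - Real.exp t) :=
        Real.log_div (ne_of_gt hm) (ne_of_gt hmt)
      rw [hlog]
      have hlu0 : Real.log (a * m / (a + 1)) = Real.log a + Real.log m - Real.log (a + 1) := by
        rw [Real.log_div (by positivity) (ne_of_gt ha1), Real.log_mul (ne_of_gt ha) (ne_of_gt hm)]
      have hlc0 : Real.log (m / (a + 1)) = Real.log m - Real.log (a + 1) :=
        Real.log_div (ne_of_gt hm) (ne_of_gt ha1)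
      have hlma : Real.log (m * a) = Real.log m + Real.log a :=
        Real.log_mul (ne_of_gt hm) (ne_of_gt ha)
      rw [hlu0] at h1; rw [hlc0] at h2
      have key : a * (Real.exp t * (a + 1) / (a * m)) + (m - Real.exp t) * (a + 1) / m
          = a + 1 := by field_simp; ring
      have h1' := mul_le_mul_of_nonneg_left h1 (le_of_lt ha)
      rw [hV, hlma]
      nlinarith [h1', h2]
    · rw [if_neg ht]
      rw [EReal.sub_top]
      exact bot_le
  · have ht0 : Real.exp (Real.log (a * m / (a + 1))) = a * m / (a + 1) :=
      Real.exp_log hu0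
    refine le_trans ?_ (le_iSup _ (Real.log (a * m / (a + 1))))
    rw [ht0] at *
    have hlt : a * m / (a + 1) < m := by
      rw [div_lt_iff₀ ha1]; nlinarith
    rw [if_pos hlt, ← EReal.coe_sub, EReal.coe_le_coe_iff]
    have hmsub : m - a * m / (a + 1) = m / (a + 1) := by field_simp; ring
    rw [hmsub]
    have : m / (m / (a + 1)) = a + 1 := by field_simp
    rw [this]
    rw [hV, Real.log_div (by positivity) (ne_of_gt ha1),
      Real.log_mul (ne_of_gt ha) (ne_of_gt hm),
      Real.log_mul (ne_of_gt hm) (ne_of_gt ha)]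
    ring_nf
    linarith
end

section
/- Let μ > 0, and for a > 0 let S_a = { (t_n)_{n≥0} : t_n ≥ 0, Σ t_n = 1, Σ n·t_n = a }. Then a·ln a − (a+1)·ln(a+1) = min_{(t_n)∈S_a} Σ_{n=0}^∞ t_n ln t_n, i.e., the infimum of the entropy sum over probability sequences on ℕ with mean a equals a·ln a − (a+1)·ln(a+1). -/
/-!
Gibbs' inequality `t log q + (t - q) ≤ t log t` bounds the entropy sum of any admissible `t` from
below by its cross entropy `Σ tₙ log qₙ` against the geometric distribution
`qₙ = (a+1)⁻¹ (a/(a+1))ⁿ`. Since `log qₙ` is affine in `n`, this cross entropy depends only on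
`Σ tₙ = 1` and `Σ n tₙ = a`, and equals `a log a - (a+1) log (a+1)`; the bound is attained at
`t = q`, which is itself admissible.
-/

open Real

lemma mul_log_add_sub_le_mul_log {t q : ℝ} (ht : 0 ≤ t) (hq : 0 < q) :
    t * log q + (t - q) ≤ t * log t := by
  rcases ht.eq_or_lt with rfl | ht
  · simpa using hq.le
  · have hlog : log q - log t ≤ q / t - 1 := by
      rw [← log_div hq.ne' ht.ne']
      exact log_le_sub_one_of_pos (div_pos hq ht)
    have key : t * (log q - log t) ≤ q - t := by
      calc t * (log q - log t) ≤ t * (q / t - 1) := mul_le_mul_of_nonneg_left hlog ht.le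
        _ = q - t := by field_simp
    linarith

theorem tsum_mul_log_le_tsum_mul_log {ι : Type*} {t q : ι → ℝ} (ht : ∀ i, 0 ≤ t i)
    (hq : ∀ i, 0 < q i) (hts : Summable t) (hqs : Summable q) (hsum : ∑' i, t i = ∑' i, q i)
    (hcross : Summable fun i => t i * log (q i)) (hent : Summable fun i => t i * log (t i)) :
    ∑' i, t i * log (q i) ≤ ∑' i, t i * log (t i) :=
  calc ∑' i, t i * log (q i)
      = ∑' i, t i * log (q i) + ((∑' i, t i) - ∑' i, q i) := by rw [hsum, sub_self, add_zero]
    _ = ∑' i, (t i * log (q i) + (t i - q i)) := by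
        rw [hcross.tsum_add (hts.sub hqs), hts.tsum_sub hqs]
    _ ≤ ∑' i, t i * log (t i) :=
        (hcross.add (hts.sub hqs)).tsum_le_tsum
          (fun i => mul_log_add_sub_le_mul_log (ht i) (hq i)) hent

noncomputable def geomDist (a : ℝ) (n : ℕ) : ℝ := (a + 1)⁻¹ * (a / (a + 1)) ^ n

namespace geomDist

variable {a : ℝ}

lemma pos (ha : 0 < a) (n : ℕ) : 0 < geomDist a n := by
  unfold geomDist; positivity

lemma log_eq (ha : 0 < a) (n : ℕ) :
    log (geomDist a n) = -log (a + 1) + n * (log a - log (a + 1)) := by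
  have ha1 : 0 < a + 1 := by linarith
  rw [geomDist, log_mul (by positivity) (by positivity), log_inv, log_pow,
    log_div ha.ne' ha1.ne']

lemma mul_log_eq (ha : 0 < a) (t : ℕ → ℝ) :
    (fun n : ℕ => t n * log (geomDist a n)) =
      fun n => -log (a + 1) * t n + (log a - log (a + 1)) * (n * t n) := by
  funext n
  rw [log_eq ha]
  ring

lemma summable_mul_log (ha : 0 < a) {t : ℕ → ℝ} (hts : Summable t)
    (hnts : Summable fun n : ℕ => (n : ℝ) * t n) :
    Summable fun n : ℕ => t n * log (geomDist a n) := by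
  rw [mul_log_eq ha]
  exact (hts.mul_left _).add (hnts.mul_left _)

lemma tsum_mul_log (ha : 0 < a) {t : ℕ → ℝ} (hts : Summable t) (ht1 : ∑' n, t n = 1)
    (hnts : Summable fun n : ℕ => (n : ℝ) * t n) (htmean : ∑' n : ℕ, (n : ℝ) * t n = a) :
    ∑' n, t n * log (geomDist a n) = a * log a - (a + 1) * log (a + 1) := by
  rw [mul_log_eq ha, (hts.mul_left _).tsum_add (hnts.mul_left _), tsum_mul_left, tsum_mul_left,
    ht1, htmean]
  ring

lemma ratio_nonneg (ha : 0 < a) : 0 ≤ a / (a + 1) := by positivity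

lemma ratio_lt_one (ha : 0 < a) : a / (a + 1) < 1 := (div_lt_one (by linarith)).2 (by linarith)

lemma norm_ratio_lt_one (ha : 0 < a) : ‖a / (a + 1)‖ < 1 := by
  rw [norm_of_nonneg (ratio_nonneg ha)]
  exact ratio_lt_one ha

lemma one_sub_ratio (ha : 0 < a) : 1 - a / (a + 1) = (a + 1)⁻¹ := by
  have ha1 : a + 1 ≠ 0 := by linarith
  field_simp
  ring

lemma summable (ha : 0 < a) : Summable (geomDist a) :=
  (summable_geometric_of_lt_one (ratio_nonneg ha) (ratio_lt_one ha)).mul_left _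

lemma tsum_eq_one (ha : 0 < a) : ∑' n, geomDist a n = 1 := by
  rw [show geomDist a = fun n => (a + 1)⁻¹ * (a / (a + 1)) ^ n from rfl, tsum_mul_left,
    tsum_geometric_of_lt_one (ratio_nonneg ha) (ratio_lt_one ha), one_sub_ratio ha, inv_inv,
    inv_mul_cancel₀ (by linarith)]

lemma coe_mul_eq : (fun n : ℕ => (n : ℝ) * geomDist a n) =
    fun n : ℕ => (a + 1)⁻¹ * ((n : ℝ) * (a / (a + 1)) ^ n) := by
  funext n
  rw [geomDist]
  ring

lemma summable_coe_mul (ha : 0 < a) : Summable fun n : ℕ => (n : ℝ) * geomDist a n := by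
  rw [coe_mul_eq]
  simpa using (summable_pow_mul_geometric_of_norm_lt_one 1 (norm_ratio_lt_one ha)).mul_left _

lemma tsum_coe_mul (ha : 0 < a) : ∑' n : ℕ, (n : ℝ) * geomDist a n = a := by
  have ha1 : a + 1 ≠ 0 := by linarith
  rw [coe_mul_eq, tsum_mul_left, tsum_coe_mul_geometric_of_norm_lt_one (norm_ratio_lt_one ha),
    one_sub_ratio ha]
  field_simp

end geomDist

theorem min_entropy_fixed_mean_general (a : ℝ) (ha : 0 < a) :
    IsLeast
      {x : ℝ | ∃ t : ℕ → ℝ, (∀ n, 0 ≤ t n) ∧ Summable t ∧ (∑' n : ℕ, t n) = 1 ∧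
        Summable (fun n : ℕ => (n : ℝ) * t n) ∧ (∑' n : ℕ, (n : ℝ) * t n) = a ∧
        Summable (fun n => t n * Real.log (t n)) ∧
        x = ∑' n : ℕ, t n * Real.log (t n)}
      (a * Real.log a - (a + 1) * Real.log (a + 1)) := by
  have hqs := geomDist.summable ha
  have hq1 := geomDist.tsum_eq_one ha
  have hnqs := geomDist.summable_coe_mul ha
  have hqmean := geomDist.tsum_coe_mul ha
  constructor
  · exact ⟨geomDist a, fun n => (geomDist.pos ha n).le, hqs, hq1, hnqs, hqmean,
      geomDist.summable_mul_log ha hqs hnqs, (geomDist.tsum_mul_log ha hqs hq1 hnqs hqmean).symm⟩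
  · rintro x ⟨t, ht0, hts, ht1, hnts, htmean, hent, rfl⟩
    rw [← geomDist.tsum_mul_log ha hts ht1 hnts htmean]
    exact tsum_mul_log_le_tsum_mul_log ht0 (geomDist.pos ha) hts hqs (ht1.trans hq1.symm)
      (geomDist.summable_mul_log ha hts hnts) hent

/-- For every `a > 0`, the minimum of the entropy sum `Σ tₙ ln tₙ` over all
probability sequences `(tₙ)` on `ℕ` with mean `Σ n·tₙ = a` equals
`a·ln a − (a+1)·ln(a+1)`.  (Here `t ln t = 0` at `t = 0`, which holds for `Real.log`.) -/
theorem min_entropy_fixed_mean (μ : ℝ) (hμ : 0 < μ) (a : ℝ) (ha : 0 < a) :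
    IsLeast
      {x : ℝ | ∃ t : ℕ → ℝ, (∀ n, 0 ≤ t n) ∧ Summable t ∧ (∑' n : ℕ, t n) = 1 ∧
        Summable (fun n : ℕ => (n : ℝ) * t n) ∧ (∑' n : ℕ, (n : ℝ) * t n) = a ∧
        Summable (fun n => t n * Real.log (t n)) ∧
        x = ∑' n : ℕ, t n * Real.log (t n)}
      (a * Real.log a - (a + 1) * Real.log (a + 1)) :=
  min_entropy_fixed_mean_general a ha
end
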